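/- arXiv:1610.08841 — 2 statements merged into one kernel-verified Lean document; each statement's English description precedes it below -/
import Mathlib

section
/- Let b, c be vectors in ℂ^n, not both zero. Then ‖b b† − c c†‖_F / (‖b‖ + ‖c‖) ≤ min over real θ of ‖e^{iθ} b − c‖ ≤ √2 ‖b b† − c c†‖_F / sqrt(‖b‖² + ‖c‖²). -/
open Matrix

noncomputable def vnorm {n : ℕ} (v : Fin n → ℂ) : ℝ :=
  Real.sqrt (∑ i, ‖v i‖ ^ 2)

noncomputable def frob {n : ℕ} (A : Matrix (Fin n) (Fin n) ℂ) : ℝ :=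
  Real.sqrt (∑ i, ∑ j, ‖A i j‖ ^ 2)

/-!
With `w = ⟪b, c⟫`, both sides are explicit in `‖b‖`, `‖c‖` and `|w|`:
`‖e^{iθ} b - c‖² = ‖b‖² + ‖c‖² - 2 Re (e^{-iθ} w)`, which is smallest, equal to
`‖b‖² + ‖c‖² - 2 |w|`, at `θ = arg w`, while `‖b b† - c c†‖_F² = ‖b‖⁴ + ‖c‖⁴ - 2 |w|²`.
Both bounds then become polynomial inequalities in `β = ‖b‖`, `γ = ‖c‖`, `t = |w|`,
valid under the Cauchy–Schwarz constraint `0 ≤ t ≤ β γ`.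
-/

open Complex ComplexConjugate InnerProductSpace Finset

section PhaseAlignment

variable {E : Type*} [NormedAddCommGroup E] [InnerProductSpace ℂ E]

theorem norm_exp_smul_sub_sq (θ : ℝ) (x y : E) :
    ‖exp (θ * I) • x - y‖ ^ 2 =
      ‖x‖ ^ 2 + ‖y‖ ^ 2 - 2 * (conj (exp (θ * I)) * ⟪x, y⟫_ℂ).re := by
  rw [@norm_sub_sq ℂ, inner_smul_left, norm_smul, norm_exp_ofReal_mul_I, one_mul,
    RCLike.re_to_complex]
  ring

theorem iInf_norm_exp_smul_sub (x y : E) :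
    ⨅ θ : ℝ, ‖exp (θ * I) • x - y‖ = √(‖x‖ ^ 2 + ‖y‖ ^ 2 - 2 * ‖⟪x, y⟫_ℂ‖) := by
  have hdist (θ : ℝ) : ‖exp (θ * I) • x - y‖ =
      √(‖x‖ ^ 2 + ‖y‖ ^ 2 - 2 * (conj (exp (θ * I)) * ⟪x, y⟫_ℂ).re) := by
    rw [← norm_exp_smul_sub_sq, Real.sqrt_sq (norm_nonneg _)]
  refine IsGLB.ciInf_eq (IsLeast.isGLB ⟨⟨arg ⟪x, y⟫_ℂ, ?_⟩, ?_⟩)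
  · have hphase : conj (exp (arg ⟪x, y⟫_ℂ * I)) * ⟪x, y⟫_ℂ = ‖⟪x, y⟫_ℂ‖ := by
      conv_lhs => rw [← norm_mul_exp_arg_mul_I ⟪x, y⟫_ℂ]
      rw [← exp_conj, mul_left_comm, ← exp_add]
      simp
    dsimp only
    rw [hdist, hphase, ofReal_re]
  · rintro _ ⟨θ, rfl⟩
    dsimp only
    rw [hdist]
    gcongr
    calc (conj (exp (θ * I)) * ⟪x, y⟫_ℂ).re ≤ ‖conj (exp (θ * I)) * ⟪x, y⟫_ℂ‖ := re_le_norm _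
      _ = ‖⟪x, y⟫_ℂ‖ := by rw [norm_mul, RCLike.norm_conj, norm_exp_ofReal_mul_I, one_mul]

end PhaseAlignment

theorem sum_sum_norm_sq_vecMulVec_sub {ι : Type*} [Fintype ι] (b c : ι → ℂ) :
    ∑ i, ∑ j, ‖(vecMulVec b (star b) - vecMulVec c (star c)) i j‖ ^ 2 =
      (∑ i, ‖b i‖ ^ 2) ^ 2 + (∑ i, ‖c i‖ ^ 2) ^ 2 - 2 * ‖∑ i, c i * conj (b i)‖ ^ 2 := by
  set w := ∑ i, c i * conj (b i)
  -- the two cross terms of `|bᵢ b̄ⱼ - cᵢ c̄ⱼ|²` sum to `w̄ w` and `w w̄` respectively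
  have hcross : ((2 * ‖w‖ ^ 2 : ℝ) : ℂ) = conj w * w + w * conj w := by
    push_cast
    rw [← mul_conj']
    ring
  apply ofReal_injective
  rw [ofReal_sub, hcross]
  push_cast
  simp only [← mul_conj', map_sum, map_sub, map_mul, conj_conj, Matrix.sub_apply, vecMulVec_apply,
    Pi.star_apply, RCLike.star_def, w]
  simp only [sq, sum_mul_sum, ← sum_add_distrib, ← sum_sub_distrib]
  refine sum_congr rfl fun i _ => sum_congr rfl fun j _ => ?_
  ring

theorem vnorm_eq_norm {n : ℕ} (v : Fin n → ℂ) :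
    vnorm v = ‖(WithLp.toLp 2 v : EuclideanSpace ℂ (Fin n))‖ := by
  rw [EuclideanSpace.norm_eq]
  rfl

theorem vnorm_smul_sub {n : ℕ} (z : ℂ) (b c : Fin n → ℂ) :
    vnorm (fun i => z * b i - c i) =
      ‖z • (WithLp.toLp 2 b : EuclideanSpace ℂ (Fin n)) - WithLp.toLp 2 c‖ := by
  rw [vnorm_eq_norm]
  rfl

theorem frob_vecMulVec_sub {n : ℕ} (b c : Fin n → ℂ) :
    frob (vecMulVec b (star b) - vecMulVec c (star c)) =
      √(vnorm b ^ 4 + vnorm c ^ 4 -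
        2 * ‖⟪(WithLp.toLp 2 b : EuclideanSpace ℂ (Fin n)), WithLp.toLp 2 c⟫_ℂ‖ ^ 2) := by
  have hsq (v : Fin n → ℂ) : vnorm v ^ 2 = ∑ i, ‖v i‖ ^ 2 :=
    Real.sq_sqrt (sum_nonneg fun i _ => sq_nonneg _)
  simp only [frob, sum_sum_norm_sq_vecMulVec_sub, PiLp.inner_apply, RCLike.inner_apply,
    show 4 = 2 * 2 from rfl, pow_mul, hsq]

theorem sqrt_pow_four_sub_div_add_le {β γ t : ℝ} (hβ : 0 ≤ β) (hγ : 0 ≤ γ) (ht : t ≤ β * γ) :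
    √(β ^ 4 + γ ^ 4 - 2 * t ^ 2) / (β + γ) ≤ √(β ^ 2 + γ ^ 2 - 2 * t) := by
  have hpos : 0 ≤ β ^ 2 + γ ^ 2 - 2 * t := by nlinarith [sq_nonneg (β - γ)]
  refine div_le_of_le_mul₀ (by positivity) (Real.sqrt_nonneg _) ?_
  rw [← Real.sqrt_sq (by positivity : 0 ≤ β + γ), ← Real.sqrt_mul hpos]
  refine Real.sqrt_le_sqrt ?_
  -- the difference is `2 (βγ - t) (β² + γ²) + 2 (βγ - t)²`
  nlinarith [mul_nonneg (sub_nonneg.2 ht) (add_nonneg (sq_nonneg β) (sq_nonneg γ))]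

theorem sqrt_sub_le_sqrt_two_mul_sqrt_pow_four_sub_div {β γ t : ℝ} (ht₀ : 0 ≤ t)
    (ht : t ≤ β * γ) :
    √(β ^ 2 + γ ^ 2 - 2 * t) ≤ √2 * √(β ^ 4 + γ ^ 4 - 2 * t ^ 2) / √(β ^ 2 + γ ^ 2) := by
  have hpos : 0 ≤ β ^ 2 + γ ^ 2 - 2 * t := by nlinarith [sq_nonneg (β - γ)]
  rcases (add_nonneg (sq_nonneg β) (sq_nonneg γ)).eq_or_lt with hS | hS
  · rw [Real.sqrt_eq_zero'.2 (by linarith)]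
    positivity
  rw [le_div_iff₀ (Real.sqrt_pos.2 hS), ← Real.sqrt_mul hpos, ← Real.sqrt_mul zero_le_two]
  refine Real.sqrt_le_sqrt ?_
  -- the difference is `(β² - γ²)² + 2 t (β² + γ² - 2 t)`
  nlinarith [sq_nonneg (β ^ 2 - γ ^ 2), mul_nonneg ht₀ hpos]

theorem outer_diff_bounds_general {n : ℕ} (b c : Fin n → ℂ) :
    frob (vecMulVec b (star b) - vecMulVec c (star c)) / (vnorm b + vnorm c) ≤
        (⨅ θ : ℝ, vnorm (fun i => Complex.exp (θ * Complex.I) * b i - c i)) ∧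
      (⨅ θ : ℝ, vnorm (fun i => Complex.exp (θ * Complex.I) * b i - c i)) ≤
        Real.sqrt 2 * frob (vecMulVec b (star b) - vecMulVec c (star c)) /
          Real.sqrt (vnorm b ^ 2 + vnorm c ^ 2) := by
  set x : EuclideanSpace ℂ (Fin n) := WithLp.toLp 2 b
  set y : EuclideanSpace ℂ (Fin n) := WithLp.toLp 2 c
  have hcs : ‖⟪x, y⟫_ℂ‖ ≤ ‖x‖ * ‖y‖ := norm_inner_le_norm x y
  simp only [vnorm_smul_sub, iInf_norm_exp_smul_sub]
  simp only [frob_vecMulVec_sub, vnorm_eq_norm]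
  exact ⟨sqrt_pow_four_sub_div_add_le (norm_nonneg x) (norm_nonneg y) hcs,
    sqrt_sub_le_sqrt_two_mul_sqrt_pow_four_sub_div (norm_nonneg _) hcs⟩

theorem outer_diff_bounds {n : ℕ} (b c : Fin n → ℂ) (h : ¬(b = 0 ∧ c = 0)) :
    frob (vecMulVec b (star b) - vecMulVec c (star c)) / (vnorm b + vnorm c) ≤
        (⨅ θ : ℝ, vnorm (fun i => Complex.exp (θ * Complex.I) * b i - c i)) ∧
      (⨅ θ : ℝ, vnorm (fun i => Complex.exp (θ * Complex.I) * b i - c i)) ≤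
        Real.sqrt 2 * frob (vecMulVec b (star b) - vecMulVec c (star c)) /
          Real.sqrt (vnorm b ^ 2 + vnorm c ^ 2) :=
  outer_diff_bounds_general b c
end

section
/- Let S ∈ ℂ^{d×d} be invertible with polar decomposition S = V Q where V = S (S† S)^{-1/2} is unitary and Q = (S† S)^{1/2} is positive definite. Then among all unitary matrices G ∈ ℂ^{d×d}, the quantity |Tr(G† S)|² is maximized by G = e^{iψ} V for ψ ∈ ℝ, and the maximum value is (Tr Q)². -/
open Matrix ComplexOrder

/-!
Diagonalize `Q = W D W*` with `D` the diagonal matrix of its (nonnegative) eigenvalues `λᵢ`. For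
unitary `G`, `tr (G* S) = tr ((W* G* V W) D) = ∑ λᵢ uᵢᵢ` with `uᵢᵢ` the diagonal entries of a
unitary matrix, hence of modulus at most `1`; so `|tr (G* S)| ≤ ∑ λᵢ = tr Q`. For `G = e^{iψ} V`
one gets `tr (G* S) = e^{-iψ} tr Q` exactly.
-/

namespace Matrix

variable {n 𝕜 : Type*} [Fintype n] [RCLike 𝕜]

lemma PosSemidef.norm_trace {Q : Matrix n n 𝕜} (hQ : Q.PosSemidef) :
    ‖Q.trace‖ = RCLike.re Q.trace := by
  simpa using congrArg RCLike.re (RCLike.norm_of_nonneg' hQ.trace_nonneg)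

variable [DecidableEq n]

lemma norm_trace_mul_diagonal_le {U : Matrix n n 𝕜} (hU : U ∈ unitaryGroup n 𝕜) {f : n → ℝ}
    (hf : 0 ≤ f) : ‖(U * diagonal (RCLike.ofReal ∘ f)).trace‖ ≤ ∑ i, f i := by
  simp only [trace, diag, mul_diagonal, Function.comp_apply]
  refine (norm_sum_le _ _).trans (Finset.sum_le_sum fun i _ => ?_)
  rw [norm_mul, RCLike.norm_of_nonneg (hf i)]
  exact mul_le_of_le_one_left (hf i) (entry_norm_bound_of_unitary hU i i)

lemma PosSemidef.norm_trace_unitary_mul_le {U Q : Matrix n n 𝕜} (hU : U ∈ unitaryGroup n 𝕜)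
    (hQ : Q.PosSemidef) : ‖(U * Q).trace‖ ≤ RCLike.re Q.trace := by
  set W : Matrix n n 𝕜 := ↑hQ.1.eigenvectorUnitary
  set D : Matrix n n 𝕜 := diagonal (RCLike.ofReal ∘ hQ.1.eigenvalues)
  have hW : W ∈ unitaryGroup n 𝕜 := hQ.1.eigenvectorUnitary.2
  have hQW : Q = W * D * star W := hQ.1.spectral_theorem
  have hconj : star W * U * W ∈ unitaryGroup n 𝕜 := mul_mem (mul_mem (Unitary.star_mem hW) hU) hW
  calc ‖(U * Q).trace‖ = ‖(star W * U * W * D).trace‖ := by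
        rw [hQW, ← mul_assoc, ← mul_assoc, trace_mul_cycle, mul_assoc _ U]
    _ ≤ ∑ i, hQ.1.eigenvalues i := norm_trace_mul_diagonal_le hconj hQ.eigenvalues_nonneg
    _ = RCLike.re Q.trace := by simp [hQ.1.trace_eq_sum_eigenvalues]

end Matrix

theorem polar_maximizes_trace_general {d : ℕ} (S V Q : Matrix (Fin d) (Fin d) ℂ)
    (hQ : Q.PosDef)
    (hV : Vᴴ * V = 1) (hpolar : S = V * Q) :
    (∀ G : Matrix (Fin d) (Fin d) ℂ, Gᴴ * G = 1 →
        ‖(Gᴴ * S).trace‖ ^ 2 ≤ (Q.trace.re) ^ 2) ∧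
      ∀ ψ : ℝ, ‖((Complex.exp (ψ * Complex.I) • V)ᴴ * S).trace‖ ^ 2
        = (Q.trace.re) ^ 2 := by
  have hQpsd := hQ.posSemidef
  refine ⟨fun G hG => ?_, fun ψ => ?_⟩
  · have hGstar : Gᴴ ∈ unitaryGroup (Fin d) ℂ := by
      rwa [mem_unitaryGroup_iff, star_eq_conjTranspose, conjTranspose_conjTranspose]
    have hGV : Gᴴ * V ∈ unitaryGroup (Fin d) ℂ := mul_mem hGstar (mem_unitaryGroup_iff'.mpr hV)
    rw [hpolar, ← mul_assoc]
    exact pow_le_pow_left₀ (norm_nonneg _) (hQpsd.norm_trace_unitary_mul_le hGV) 2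
  · rw [conjTranspose_smul, smul_mul, hpolar, ← mul_assoc, hV, one_mul, trace_smul, norm_smul,
      norm_star, Complex.norm_exp_ofReal_mul_I, one_mul, hQpsd.norm_trace, RCLike.re_to_complex]

theorem polar_maximizes_trace {d : ℕ} (S V Q : Matrix (Fin d) (Fin d) ℂ)
    (hS : IsUnit S.det) (hQ : Q.PosDef) (hQsq : Q * Q = Sᴴ * S)
    (hV : Vᴴ * V = 1) (hpolar : S = V * Q) :
    (∀ G : Matrix (Fin d) (Fin d) ℂ, Gᴴ * G = 1 →
        ‖(Gᴴ * S).trace‖ ^ 2 ≤ (Q.trace.re) ^ 2) ∧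
      ∀ ψ : ℝ, ‖((Complex.exp (ψ * Complex.I) • V)ᴴ * S).trace‖ ^ 2
        = (Q.trace.re) ^ 2 :=
  polar_maximizes_trace_general S V Q hQ hV hpolar
end
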